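/- If A is a Rees algebra and B is its differential closure, then ord_A(p) = ord_B(p) for all p in the common singular locus; more precisely, for any rational q ≥ 1, the set of points of the singular locus with ord_A ≥ q equals the set with ord_B ≥ q. -/

import Mathlib

/-- The order of an ideal `I` in a local ring: the largest `n` with `I ⊆ m^n`. -/
noncomputable def idealOrd {R : Type*} [CommRing R] [IsLocalRing R] (I : Ideal R) : ℕ∞ :=
  ⨆ n ∈ {n : ℕ | I ≤ IsLocalRing.maximalIdeal R ^ n}, (n : ℕ∞)

/-- `Δ(I)`: the ideal generated by `I` together with all first-order derivatives
of sections of `I` (over the base `k`). -/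
noncomputable def deltaIdeal (k : Type*) {R : Type*} [CommRing k] [CommRing R] [Algebra k R]
    (I : Ideal R) : Ideal R :=
  I ⊔ Ideal.span {x | ∃ (D : Derivation k R R) (a : R), a ∈ I ∧ D a = x}

/-- Iterated `Δ` operator. -/
noncomputable def deltaIter (k : Type*) {R : Type*} [CommRing k] [CommRing R] [Algebra k R] :
    ℕ → Ideal R → Ideal R
  | 0, I => I
  | j + 1, I => deltaIdeal k (deltaIter k j I)

/-- The Rees algebra generated by a family `G` of ideals, `G d` sitting in degree `d`. -/
noncomputable def reesGen {R : Type*} [CommRing R] (G : ℕ → Ideal R) : ℕ → Ideal R := fun i =>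
  if i = 0 then ⊤ else
    ⨆ (s : Multiset ℕ) (_ : s.sum = i) (_ : 0 ∉ s), (s.map G).prod

/-- `A` is generated in the degrees of the finite set `K`. -/
def HasGeneratingDegrees {R : Type*} [CommRing R] (A : ℕ → Ideal R) (K : Finset ℕ) : Prop :=
  ∀ i : ℕ, 0 < i →
    A i = ⨆ (s : Multiset ℕ) (_ : ∀ j ∈ s, j ∈ K) (_ : s.sum = i), (s.map A).prod

/-!
A derivation maps `m ^ (t + 1)` into `m ^ t`, so `ord (Δ^j I) ≥ ord I - j`. If `ord (A n) ≥ q n`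
with `q ≥ 1`, then `ord (Δ^j (A n)) ≥ q n - j ≥ q (n - j)`: every generator of `B` satisfies the
bound in its own degree. Since `ord` is superadditive on products and turns sums of ideals into
infima, the bound passes to all of `B`. Conversely `A ⊆ B` in positive degrees (take `j = 0`), and
`ord` is antitone.
-/

open IsLocalRing

theorem Derivation.map_mem_pow_of_mem_pow_succ {k R : Type*} [CommRing k] [CommRing R]
    [Algebra k R] (D : Derivation k R R) (I : Ideal R) :
    ∀ (n : ℕ) {x : R}, x ∈ I ^ (n + 1) → D x ∈ I ^ n
  | 0, _, _ => by simp
  | n + 1, x, hx => by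
    rw [pow_succ] at hx
    refine Submodule.mul_induction_on hx (fun p hp q hq => ?_) (fun p q hp hq => ?_)
    · rw [Derivation.leibniz, smul_eq_mul, smul_eq_mul]
      refine Ideal.add_mem _ (Ideal.mul_mem_right _ _ hp) ?_
      rw [pow_succ']
      exact Ideal.mul_mem_mul hq (D.map_mem_pow_of_mem_pow_succ I n hp)
    · rw [map_add]
      exact Ideal.add_mem _ hp hq

section idealOrd

variable {R : Type*} [CommRing R] [IsLocalRing R]

theorem natCast_le_idealOrd_iff {I : Ideal R} {n : ℕ} :
    (n : ℕ∞) ≤ idealOrd I ↔ I ≤ maximalIdeal R ^ n := by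
  refine ⟨fun h => ?_, fun h => le_iSup₂_of_le n h le_rfl⟩
  cases n with
  | zero => simp
  | succ t =>
    have ht : (t : ℕ∞) < idealOrd I := (ENat.natCast_lt_natCast.mpr t.lt_succ_self).trans_le h
    obtain ⟨p, hp, htp⟩ := lt_biSup_iff.mp ht
    exact hp.trans (Ideal.pow_le_pow_right (ENat.natCast_lt_natCast.mp htp))

theorem idealOrd_antitone : Antitone (idealOrd (R := R)) := fun _ _ hIJ =>
  ENat.forall_natCast_le_iff_le.mp fun _ hn =>
    natCast_le_idealOrd_iff.mpr (hIJ.trans (natCast_le_idealOrd_iff.mp hn))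

theorem idealOrd_iSup {ι : Sort*} (I : ι → Ideal R) :
    idealOrd (⨆ x, I x) = ⨅ x, idealOrd (I x) := by
  refine le_antisymm (le_iInf fun x => idealOrd_antitone (le_iSup I x)) ?_
  refine ENat.forall_natCast_le_iff_le.mp fun n hn => ?_
  exact natCast_le_idealOrd_iff.mpr <| iSup_le fun x =>
    natCast_le_idealOrd_iff.mp (hn.trans (iInf_le _ x))

theorem idealOrd_add_le_idealOrd_mul (I J : Ideal R) :
    idealOrd I + idealOrd J ≤ idealOrd (I * J) :=
  ENat.biSup_add_biSup_le ⟨0, by simp⟩ ⟨0, by simp⟩ fun p hp q hq =>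
    le_iSup₂_of_le (p + q) (show I * J ≤ _ from pow_add (maximalIdeal R) p q ▸ Ideal.mul_mono hp hq)
      (by push_cast; rfl)

theorem sum_idealOrd_le_idealOrd_prod (s : Multiset (Ideal R)) :
    (s.map idealOrd).sum ≤ idealOrd s.prod := by
  induction s using Multiset.induction with
  | empty => simp
  | cons I s ih =>
    rw [Multiset.map_cons, Multiset.sum_cons, Multiset.prod_cons]
    exact (add_le_add_right ih _).trans (idealOrd_add_le_idealOrd_mul I s.prod)

theorem idealOrd_le_idealOrd_deltaIdeal_add_one (k : Type*) [CommRing k] [Algebra k R]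
    (I : Ideal R) : idealOrd I ≤ idealOrd (deltaIdeal k I) + 1 := by
  refine iSup₂_le fun n hn => ?_
  cases n with
  | zero => exact zero_le
  | succ t =>
    have hΔ : deltaIdeal k I ≤ maximalIdeal R ^ t := by
      refine sup_le (hn.trans (Ideal.pow_le_pow_right t.le_succ)) (Ideal.span_le.mpr ?_)
      rintro _ ⟨D, a, ha, rfl⟩
      exact D.map_mem_pow_of_mem_pow_succ _ t (hn ha)
    push_cast
    gcongr
    exact natCast_le_idealOrd_iff.mpr hΔ

theorem idealOrd_le_idealOrd_deltaIter_add (k : Type*) [CommRing k] [Algebra k R]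
    (I : Ideal R) (j : ℕ) : idealOrd I ≤ idealOrd (deltaIter k j I) + j := by
  induction j with
  | zero => simp [deltaIter]
  | succ j ih =>
    calc idealOrd I ≤ idealOrd (deltaIter k j I) + j := ih
      _ ≤ idealOrd (deltaIter k (j + 1) I) + 1 + j := by
        gcongr; exact idealOrd_le_idealOrd_deltaIdeal_add_one k _
      _ = idealOrd (deltaIter k (j + 1) I) + ↑(j + 1) := by push_cast; ring

theorem natCast_mul_le_mul_idealOrd_deltaIter (k : Type*) [CommRing k] [Algebra k R]
    {I : Ideal R} {a b n j : ℕ} (hba : b ≤ a) (hjn : j ≤ n)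
    (hI : ((a * n : ℕ) : ℕ∞) ≤ b * idealOrd I) :
    ((a * (n - j) : ℕ) : ℕ∞) ≤ b * idealOrd (deltaIter k j I) := by
  refine (ENat.add_le_add_iff_right (ENat.natCast_ne_top (a * j))).mp ?_
  calc ((a * (n - j) : ℕ) : ℕ∞) + (a * j : ℕ) = (a * n : ℕ) := by
        rw [← Nat.cast_add, ← mul_add, Nat.sub_add_cancel hjn]
    _ ≤ b * idealOrd I := hI
    _ ≤ b * (idealOrd (deltaIter k j I) + j) := by
        gcongr; exact idealOrd_le_idealOrd_deltaIter_add k I j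
    _ = b * idealOrd (deltaIter k j I) + (b * j : ℕ) := by push_cast; ring
    _ ≤ b * idealOrd (deltaIter k j I) + (a * j : ℕ) := by gcongr

end idealOrd

section reesGen

variable {R : Type*} [CommRing R]

theorem natCast_mul_le_mul_idealOrd_reesGen [IsLocalRing R] {G : ℕ → Ideal R} {a b : ℕ}
    (hb : b ≠ 0) (hG : ∀ d, 0 < d → ((a * d : ℕ) : ℕ∞) ≤ b * idealOrd (G d)) (i : ℕ) :
    ((a * i : ℕ) : ℕ∞) ≤ b * idealOrd (reesGen G i) := by
  rw [reesGen]
  split_ifs with hi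
  · simp [hi]
  simp only [idealOrd_iSup, ENat.mul_iInf_of_ne (Nat.cast_ne_zero.mpr hb), le_iInf_iff]
  intro t ht ht0
  calc ((a * i : ℕ) : ℕ∞) = (t.map fun d => ((a * d : ℕ) : ℕ∞)).sum := by
        push_cast [← ht, Nat.cast_multiset_sum, Multiset.sum_map_mul_left]; rfl
    _ ≤ (t.map fun d => (b : ℕ∞) * idealOrd (G d)).sum :=
        Multiset.sum_map_le_sum_map _ _ fun d hd =>
          hG d (Nat.pos_of_ne_zero fun h => ht0 (h ▸ hd))
    _ = b * ((t.map G).map idealOrd).sum := by rw [Multiset.map_map, Multiset.sum_map_mul_left]; rfl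
    _ ≤ b * idealOrd (t.map G).prod := by gcongr; exact sum_idealOrd_le_idealOrd_prod _

theorem le_reesGen_of_hasGeneratingDegrees {A G : ℕ → Ideal R} {K : Finset ℕ}
    (hKpos : ∀ n ∈ K, 0 < n) (hgen : HasGeneratingDegrees A K) (hAG : ∀ n ∈ K, A n ≤ G n)
    {i : ℕ} (hi : 0 < i) : A i ≤ reesGen G i := by
  rw [hgen i hi, reesGen, if_neg hi.ne']
  refine iSup₂_le fun t htK => iSup_le fun ht => le_iSup₂_of_le t ht <|
    le_iSup_of_le (fun h0 => (hKpos 0 (htK 0 h0)).false) ?_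
  exact Multiset.prod_map_le_prod_map _ _ fun n hn => hAG n (htK n hn)

end reesGen

theorem differential_closure_same_order_general
    {k R : Type*} [Field k] [CommRing R] [IsLocalRing R] [Algebra k R]
    (A : ℕ → Ideal R)
    (K : Finset ℕ) (hKpos : ∀ j ∈ K, 0 < j) (hgen : HasGeneratingDegrees A K)
    (B : ℕ → Ideal R)
    (hB : B = reesGen (fun d =>
      ⨆ (n : ℕ) (_ : n ∈ K) (j : ℕ) (_ : j < n) (_ : n - j = d), deltaIter k j (A n)))
    (a b : ℕ) (hb : 0 < b) (hq : b ≤ a) :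
    (∀ i : ℕ, 0 < i → ((a * i : ℕ) : ℕ∞) ≤ (b : ℕ∞) * idealOrd (A i)) ↔
    (∀ i : ℕ, 0 < i → ((a * i : ℕ) : ℕ∞) ≤ (b : ℕ∞) * idealOrd (B i)) := by
  subst hB
  refine ⟨fun hA i _ => natCast_mul_le_mul_idealOrd_reesGen hb.ne' (fun d _ => ?_) i,
    fun hB i hi => (hB i hi).trans ?_⟩
  · simp only [idealOrd_iSup, ENat.mul_iInf_of_ne (Nat.cast_ne_zero.mpr hb.ne'), le_iInf_iff]
    rintro n hn j hj rfl
    exact natCast_mul_le_mul_idealOrd_deltaIter k hq hj.le (hA n (hKpos n hn))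
  · gcongr
    refine idealOrd_antitone (le_reesGen_of_hasGeneratingDegrees hKpos hgen (fun n hn => ?_) hi)
    exact le_iSup_of_le n <| le_iSup_of_le hn <| le_iSup_of_le 0 <|
      le_iSup_of_le (hKpos n hn) <| le_iSup_of_le (Nat.sub_zero n) le_rfl

/-- a Rees algebra `A` and its differential closure `B` have the
same order on the common singular locus; precisely, at any point `p` (local ring
`R = O_{W,p}`), for any rational `q = a/b ≥ 1`, one has `ord_A(p) ≥ q` iff
`ord_B(p) ≥ q`, where `ord_A(p) ≥ q` means `ord_p(A i) ≥ q·i` for all `i > 0`. -/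
theorem differential_closure_same_order
    {k R : Type*} [Field k] [CharZero k] [CommRing R] [IsLocalRing R] [Algebra k R]
    (A : ℕ → Ideal R) (hA0 : A 0 = ⊤) (hAmul : ∀ i j, A i * A j ≤ A (i + j))
    (K : Finset ℕ) (hKpos : ∀ j ∈ K, 0 < j) (hgen : HasGeneratingDegrees A K)
    (B : ℕ → Ideal R)
    (hB : B = reesGen (fun d =>
      ⨆ (n : ℕ) (_ : n ∈ K) (j : ℕ) (_ : j < n) (_ : n - j = d), deltaIter k j (A n)))
    (a b : ℕ) (hb : 0 < b) (hq : b ≤ a) :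
    (∀ i : ℕ, 0 < i → ((a * i : ℕ) : ℕ∞) ≤ (b : ℕ∞) * idealOrd (A i)) ↔
    (∀ i : ℕ, 0 < i → ((a * i : ℕ) : ℕ∞) ≤ (b : ℕ∞) * idealOrd (B i)) :=
  differential_closure_same_order_general A K hKpos hgen B hB a b hb hq
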